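/- arXiv:2006.03682 — 2 statements merged into one kernel-verified Lean document; each statement's English description precedes it below -/
import Mathlib

section
/- Let 0 < γ1 < 1 and let E = (xE, yE), P1 = (x1, y1) ∈ ℝ² with E ≠ P1 and yE > 0. Then the Apollonius circle C = {z ∈ ℝ² : dist(z, E) = γ1·dist(z, P1)} meets the x-axis {(x, 0) : x ∈ ℝ} in exactly one point if and only if (1 − γ1²)·yE² = γ1²(xE − x1)² + γ1²(1 − γ1²)·y1² (equivalently, γ1²(x1² + (1 − γ1²)y1²) + γ1²xE² − (1 − γ1²)yE² − 2γ1²x1xE = 0), and in that case the unique intersection (tangency) point is ((xE − γ1²x1)/(1 − γ1²), 0). -/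
noncomputable section

def pt (x y : ℝ) : EuclideanSpace ℝ (Fin 2) := (WithLp.equiv 2 (Fin 2 → ℝ)).symm ![x, y]

/-! On the x-axis the Apollonius condition `|z - E|² = γ²|z - P₁|²` becomes, after multiplying
by `1 - γ²`, the completed square `((1 - γ²)x - (xE - γ²x₁))² = D` with
`D = γ²(xE - x₁)² + γ²(1 - γ²)y₁² - (1 - γ²)yE²`. Such an equation has a unique real solution
exactly when `D = 0`, since otherwise the solutions come in pairs symmetric about
`(xE - γ²x₁)/(1 - γ²)`. -/

@[simp] lemma pt_apply_zero (x y : ℝ) : pt x y 0 = x := rfl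

@[simp] lemma pt_apply_one (x y : ℝ) : pt x y 1 = y := rfl

lemma eq_pt_of_apply_one_eq_zero {z : EuclideanSpace ℝ (Fin 2)} (hz : z 1 = 0) :
    z = pt (z 0) 0 := by
  ext i
  fin_cases i
  · rfl
  · exact hz

lemma dist_pt_sq (x y x' y' : ℝ) :
    dist (pt x y) (pt x' y') ^ 2 = (x - x') ^ 2 + (y - y') ^ 2 := by
  rw [EuclideanSpace.dist_eq, Real.sq_sqrt (by positivity), Fin.sum_univ_two]
  simp [Real.dist_eq, sq_abs]

lemma existsUnique_on_axis_iff (P : EuclideanSpace ℝ (Fin 2) → Prop) :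
    (∃! z : EuclideanSpace ℝ (Fin 2), P z ∧ z 1 = 0) ↔ ∃! x : ℝ, P (pt x 0) := by
  constructor
  · rintro ⟨z, ⟨hPz, hz⟩, huniq⟩
    refine ⟨z 0, eq_pt_of_apply_one_eq_zero hz ▸ hPz, fun x hx => ?_⟩
    rw [← huniq (pt x 0) ⟨hx, rfl⟩, pt_apply_zero]
  · rintro ⟨x, hx, huniq⟩
    refine ⟨pt x 0, ⟨hx, rfl⟩, fun z ⟨hPz, hz⟩ => ?_⟩
    rw [eq_pt_of_apply_one_eq_zero hz] at hPz ⊢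
    rw [huniq _ hPz]

lemma dist_eq_mul_dist_iff_sq {X : Type*} [PseudoMetricSpace X] {γ : ℝ} (hγ : 0 ≤ γ)
    (z a b : X) : dist z a = γ * dist z b ↔ dist z a ^ 2 = γ ^ 2 * dist z b ^ 2 := by
  rw [← mul_pow, sq_eq_sq₀ dist_nonneg (by positivity)]

section Quadratic

variable {a b x : ℝ}

lemma affine_sq_eq_zero_iff (ha : a ≠ 0) : (a * x - b) ^ 2 = 0 ↔ x = b / a := by
  rw [pow_eq_zero_iff two_ne_zero, sub_eq_zero, eq_div_iff ha, mul_comm]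

lemma existsUnique_affine_sq_eq_iff (ha : a ≠ 0) (D : ℝ) :
    (∃! x : ℝ, (a * x - b) ^ 2 = D) ↔ D = 0 := by
  constructor
  · rintro ⟨x, hx, huniq⟩
    have hreflect : 2 * b / a - x = x := huniq _ (by
      beta_reduce
      rw [← hx, mul_sub, mul_div_cancel₀ _ ha]
      ring)
    have hx' : x = b / a := by
      field_simp at hreflect ⊢
      linarith
    rw [← hx, (affine_sq_eq_zero_iff ha).mpr hx']
  · rintro rfl
    exact ⟨b / a, (affine_sq_eq_zero_iff ha).mpr rfl,
      fun _ hy => (affine_sq_eq_zero_iff ha).mp hy⟩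

end Quadratic

lemma apollonius_on_axis_iff {γ : ℝ} (h0 : 0 ≤ γ) (h1 : 1 - γ ^ 2 ≠ 0) (x xE yE x1 y1 : ℝ) :
    dist (pt x 0) (pt xE yE) = γ * dist (pt x 0) (pt x1 y1) ↔
      ((1 - γ ^ 2) * x - (xE - γ ^ 2 * x1)) ^ 2 =
        γ ^ 2 * (xE - x1) ^ 2 + γ ^ 2 * (1 - γ ^ 2) * y1 ^ 2 - (1 - γ ^ 2) * yE ^ 2 := by
  rw [dist_eq_mul_dist_iff_sq h0, dist_pt_sq, dist_pt_sq, ← mul_right_inj' h1]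
  constructor <;> intro h <;> linear_combination h

theorem apollonius_tangent_to_axis_general (γ1 xE yE x1 y1 : ℝ) (h0 : 0 < γ1) (h1 : γ1 < 1) :
    ((∃! z : EuclideanSpace ℝ (Fin 2),
        dist z (pt xE yE) = γ1 * dist z (pt x1 y1) ∧ z 1 = 0) ↔
      (1 - γ1 ^ 2) * yE ^ 2 =
        γ1 ^ 2 * (xE - x1) ^ 2 + γ1 ^ 2 * (1 - γ1 ^ 2) * y1 ^ 2) ∧
    ((1 - γ1 ^ 2) * yE ^ 2 =
        γ1 ^ 2 * (xE - x1) ^ 2 + γ1 ^ 2 * (1 - γ1 ^ 2) * y1 ^ 2 ↔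
      γ1 ^ 2 * (x1 ^ 2 + (1 - γ1 ^ 2) * y1 ^ 2) + γ1 ^ 2 * xE ^ 2
        - (1 - γ1 ^ 2) * yE ^ 2 - 2 * γ1 ^ 2 * x1 * xE = 0) ∧
    ((1 - γ1 ^ 2) * yE ^ 2 =
        γ1 ^ 2 * (xE - x1) ^ 2 + γ1 ^ 2 * (1 - γ1 ^ 2) * y1 ^ 2 →
      ∀ z : EuclideanSpace ℝ (Fin 2),
        dist z (pt xE yE) = γ1 * dist z (pt x1 y1) ∧ z 1 = 0 →
          z = pt ((xE - γ1 ^ 2 * x1) / (1 - γ1 ^ 2)) 0) := by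
  have ha : 1 - γ1 ^ 2 ≠ 0 := by nlinarith
  have hcircle := apollonius_on_axis_iff h0.le ha
  have htangent : (1 - γ1 ^ 2) * yE ^ 2 =
      γ1 ^ 2 * (xE - x1) ^ 2 + γ1 ^ 2 * (1 - γ1 ^ 2) * y1 ^ 2 ↔
      γ1 ^ 2 * (xE - x1) ^ 2 + γ1 ^ 2 * (1 - γ1 ^ 2) * y1 ^ 2 - (1 - γ1 ^ 2) * yE ^ 2 = 0 := by
    rw [sub_eq_zero, eq_comm]
  refine ⟨?_, ?_, fun h z ⟨hz, hz1⟩ => ?_⟩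
  · rw [existsUnique_on_axis_iff, htangent]
    simp only [hcircle]
    exact existsUnique_affine_sq_eq_iff ha _
  · constructor <;> intro h <;> linear_combination -h
  · rw [eq_pt_of_apply_one_eq_zero hz1] at hz ⊢
    rw [hcircle, htangent.mp h, affine_sq_eq_zero_iff ha] at hz
    rw [hz]

/-- For `0 < γ1 < 1`, `E = (xE,yE) ≠ P1 = (x1,y1)` with `yE > 0`, the Apollonius circle
`{z : dist(z,E) = γ1·dist(z,P1)}` meets the x-axis in exactly one point iff
`(1 − γ1²)yE² = γ1²(xE − x1)² + γ1²(1 − γ1²)y1²` (equivalently,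
`γ1²(x1² + (1 − γ1²)y1²) + γ1²xE² − (1 − γ1²)yE² − 2γ1²x1xE = 0`), and in that case the
unique tangency point is `((xE − γ1²x1)/(1 − γ1²), 0)`. -/
theorem apollonius_tangent_to_axis (γ1 xE yE x1 y1 : ℝ) (h0 : 0 < γ1) (h1 : γ1 < 1)
    (hne : pt xE yE ≠ pt x1 y1) (hyE : 0 < yE) :
    ((∃! z : EuclideanSpace ℝ (Fin 2),
        dist z (pt xE yE) = γ1 * dist z (pt x1 y1) ∧ z 1 = 0) ↔
      (1 - γ1 ^ 2) * yE ^ 2 =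
        γ1 ^ 2 * (xE - x1) ^ 2 + γ1 ^ 2 * (1 - γ1 ^ 2) * y1 ^ 2) ∧
    ((1 - γ1 ^ 2) * yE ^ 2 =
        γ1 ^ 2 * (xE - x1) ^ 2 + γ1 ^ 2 * (1 - γ1 ^ 2) * y1 ^ 2 ↔
      γ1 ^ 2 * (x1 ^ 2 + (1 - γ1 ^ 2) * y1 ^ 2) + γ1 ^ 2 * xE ^ 2
        - (1 - γ1 ^ 2) * yE ^ 2 - 2 * γ1 ^ 2 * x1 * xE = 0) ∧
    ((1 - γ1 ^ 2) * yE ^ 2 =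
        γ1 ^ 2 * (xE - x1) ^ 2 + γ1 ^ 2 * (1 - γ1 ^ 2) * y1 ^ 2 →
      ∀ z : EuclideanSpace ℝ (Fin 2),
        dist z (pt xE yE) = γ1 * dist z (pt x1 y1) ∧ z 1 = 0 →
          z = pt ((xE - γ1 ^ 2 * x1) / (1 - γ1 ^ 2)) 0) :=
  apollonius_tangent_to_axis_general γ1 xE yE x1 y1 h0 h1
end
end

section
/- Let 0 < γ2 < γ1 < 1, set γ = γ2/γ1 ∈ (0, 1), and let E = (xE, yE), P1 = (x1, y1), P2 = (x2, y2) ∈ ℝ². Assume D := γ²(x1 − x2)² − (1 − γ²)(y1² − γ²y2²) ≥ 0, and let xI = (x1 − γ²x2 + √D)/(1 − γ²) and I = (xI, 0). Then: (a) dist(I, P1) = γ·dist(I, P2); and (b) the point I satisfies both dist(I, E) = γ1·dist(I, P1) and dist(I, E) = γ2·dist(I, P2) if and only if γ1²((x1 − xI)² + y1²) − (xE − xI)² − yE² = 0. -/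
noncomputable section

lemma dist_pt (a b c d : ℝ) : dist (pt a b) (pt c d) = Real.sqrt ((a-c)^2+(b-d)^2) := by
  rw [EuclideanSpace.dist_eq]
  simp [pt, Fin.sum_univ_two, Real.dist_eq, sq_abs]

/-- With `0 < γ2 < γ1 < 1`, `γ = γ2/γ1`, `D = γ²(x1 − x2)² − (1 − γ²)(y1² − γ²y2²) ≥ 0`,
`xI = (x1 − γ²x2 + √D)/(1 − γ²)` and `I = (xI, 0)`:
(a) `dist(I,P1) = γ·dist(I,P2)`; and (b) `I` satisfies both
`dist(I,E) = γ1·dist(I,P1)` and `dist(I,E) = γ2·dist(I,P2)` iff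
`γ1²((x1 − xI)² + y1²) − (xE − xI)² − yE² = 0`. -/
theorem simultaneous_capture_fast_pursuers (γ1 γ2 γ xE yE x1 y1 x2 y2 D xI : ℝ)
    (h20 : 0 < γ2) (h21 : γ2 < γ1) (h11 : γ1 < 1)
    (hγ : γ = γ2 / γ1)
    (hD : D = γ ^ 2 * (x1 - x2) ^ 2 - (1 - γ ^ 2) * (y1 ^ 2 - γ ^ 2 * y2 ^ 2))
    (hDpos : 0 ≤ D)
    (hxI : xI = (x1 - γ ^ 2 * x2 + Real.sqrt D) / (1 - γ ^ 2)) :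
    dist (pt xI 0) (pt x1 y1) = γ * dist (pt xI 0) (pt x2 y2) ∧
    ((dist (pt xI 0) (pt xE yE) = γ1 * dist (pt xI 0) (pt x1 y1) ∧
        dist (pt xI 0) (pt xE yE) = γ2 * dist (pt xI 0) (pt x2 y2)) ↔
      γ1 ^ 2 * ((x1 - xI) ^ 2 + y1 ^ 2) - (xE - xI) ^ 2 - yE ^ 2 = 0) := by
  have h10 : (0:ℝ) < γ1 := h20.trans h21
  have hγpos : 0 < γ := by rw [hγ]; positivity
  have hγ1 : γ < 1 := by rw [hγ]; exact (div_lt_one h10).2 h21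
  have hA : (0:ℝ) < 1 - γ ^ 2 := by nlinarith
  have hs : Real.sqrt D ^ 2 = D := Real.sq_sqrt hDpos
  have hxIA : xI * (1 - γ ^ 2) = x1 - γ ^ 2 * x2 + Real.sqrt D := by
    rw [hxI]; field_simp
  -- the key quadratic identity
  have key0 : ((xI - x1) ^ 2 + y1 ^ 2 - γ ^ 2 * ((xI - x2) ^ 2 + y2 ^ 2)) * (1 - γ ^ 2) = 0 := by
    linear_combination (xI * (1 - γ ^ 2) - (x1 - γ ^ 2 * x2) + Real.sqrt D) * hxIA + hs + hD
  have key : (xI - x1) ^ 2 + y1 ^ 2 = γ ^ 2 * ((xI - x2) ^ 2 + y2 ^ 2) := by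
    have := (mul_eq_zero.mp key0).resolve_right hA.ne'
    linarith
  have d1 : dist (pt xI 0) (pt x1 y1) = Real.sqrt ((xI - x1) ^ 2 + y1 ^ 2) := by
    rw [dist_pt]; ring_nf
  have d2 : dist (pt xI 0) (pt x2 y2) = Real.sqrt ((xI - x2) ^ 2 + y2 ^ 2) := by
    rw [dist_pt]; ring_nf
  have dE : dist (pt xI 0) (pt xE yE) = Real.sqrt ((xI - xE) ^ 2 + yE ^ 2) := by
    rw [dist_pt]; ring_nf
  have parta : dist (pt xI 0) (pt x1 y1) = γ * dist (pt xI 0) (pt x2 y2) := by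
    rw [d1, d2, key, Real.sqrt_mul (by positivity), Real.sqrt_sq hγpos.le]
  refine ⟨parta, ?_, ?_⟩
  · rintro ⟨h1, -⟩
    have hsq : ((xI - xE) ^ 2 + yE ^ 2) = γ1 ^ 2 * ((xI - x1) ^ 2 + y1 ^ 2) := by
      have := congrArg (· ^ 2) h1
      simp only [dE, d1, mul_pow] at this
      rw [Real.sq_sqrt (by positivity), Real.sq_sqrt (by positivity)] at this
      linarith
    linear_combination -hsq
  · intro hB
    have hsq : ((xI - xE) ^ 2 + yE ^ 2) = γ1 ^ 2 * ((xI - x1) ^ 2 + y1 ^ 2) := by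
      linear_combination -hB
    have h1 : dist (pt xI 0) (pt xE yE) = γ1 * dist (pt xI 0) (pt x1 y1) := by
      rw [dE, d1, hsq, Real.sqrt_mul (by positivity), Real.sqrt_sq h10.le]
    refine ⟨h1, ?_⟩
    have hgg : γ1 * γ = γ2 := by rw [hγ]; field_simp
    rw [h1, parta, ← mul_assoc, hgg]
end
end
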